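/- arXiv:1304.8033 — 2 statements merged into one kernel-verified Lean document; each statement's English description precedes it below -/
import Mathlib

section
/- Let β₁, …, β_q be distinct positive roots all of the same height k+1 in a crystallographic root system Φ. Then the intersection X = H_{β₁} ∩ ⋯ ∩ H_{β_q} of their orthogonal hyperplanes has codimension q in the ambient vector space. -/
open Finset Submodule
open scoped Classical

/-- A (reduced) crystallographic root system in the Euclidean space `ℝⁿ`,
together with a chosen simple system `Δ` and the corresponding positive
roots `Pos`, and the (nonnegative integer) coordinates `coeff β a` of a
positive root `β` with respect to the simple roots. -/
structure CRS (n : ℕ) where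
  Φ : Finset (EuclideanSpace ℝ (Fin n))
  Δ : Finset (EuclideanSpace ℝ (Fin n))
  Pos : Finset (EuclideanSpace ℝ (Fin n))
  coeff : EuclideanSpace ℝ (Fin n) → EuclideanSpace ℝ (Fin n) → ℕ
  zero_notmem : (0 : EuclideanSpace ℝ (Fin n)) ∉ Φ
  span_top : Submodule.span ℝ (Φ : Set (EuclideanSpace ℝ (Fin n))) = ⊤
  Δ_sub : Δ ⊆ Pos
  Pos_sub : Pos ⊆ Φ
  neg_mem : ∀ α ∈ Φ, -α ∈ Φ
  pos_or_neg : ∀ α ∈ Φ, α ∈ Pos ∨ -α ∈ Pos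
  not_pos_and_neg : ∀ α ∈ Pos, -α ∉ Pos
  reduced : ∀ α ∈ Φ, ∀ c : ℝ, c • α ∈ Φ → c = 1 ∨ c = -1
  reflect_mem : ∀ α ∈ Φ, ∀ β ∈ Φ,
    β - ((2 * inner ℝ α β / inner ℝ α α : ℝ)) • α ∈ Φ
  cartan_int : ∀ α ∈ Φ, ∀ β ∈ Φ, ∃ z : ℤ, (2 * inner ℝ α β / inner ℝ α α : ℝ) = z
  Δ_indep : LinearIndependent ℝ (fun a : Δ => (a : EuclideanSpace ℝ (Fin n)))
  pos_eq_sum : ∀ β ∈ Pos, β = ∑ a ∈ Δ, (coeff β a : ℝ) • a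

namespace CRS

variable {n : ℕ}

/-- The height of a positive root: the sum of its coordinates over `Δ`. -/
def ht (R : CRS n) (β : EuclideanSpace ℝ (Fin n)) : ℕ := ∑ a ∈ R.Δ, R.coeff β a

/-- The root order: `rle β α` means `β ≤ α`, i.e. `α - β` is a nonnegative
integer combination of the simple roots. -/
def rle (R : CRS n) (β α : EuclideanSpace ℝ (Fin n)) : Prop :=
  ∃ c : EuclideanSpace ℝ (Fin n) → ℕ, α - β = ∑ a ∈ R.Δ, (c a : ℝ) • a

/-- An ideal of the positive root poset: a downward closed set of positive roots. -/
def IsIdeal (R : CRS n) (I : Finset (EuclideanSpace ℝ (Fin n))) : Prop :=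
  I ⊆ R.Pos ∧ ∀ α ∈ I, ∀ β ∈ R.Pos, R.rle β α → β ∈ I

/-- Irreducibility: the simple system cannot be split into two nonempty
mutually orthogonal parts. -/
def Irred (R : CRS n) : Prop :=
  ∀ s t : Finset (EuclideanSpace ℝ (Fin n)), s ∪ t = R.Δ → Disjoint s t →
    (∀ a ∈ s, ∀ b ∈ t, (inner ℝ a b : ℝ) = 0) → s = ∅ ∨ t = ∅

/-- The positive roots of the localized root system `Φ_X = Φ ∩ X^⊥`. -/
noncomputable def PosIn (R : CRS n) (X : Submodule ℝ (EuclideanSpace ℝ (Fin n))) :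
    Finset (EuclideanSpace ℝ (Fin n)) :=
  R.Pos.filter (fun β => β ∈ Xᗮ)

end CRS

/-- The hyperplane orthogonal to a root `β`. -/
noncomputable def H {n : ℕ} (β : EuclideanSpace ℝ (Fin n)) : Submodule ℝ (EuclideanSpace ℝ (Fin n)) :=
  (ℝ ∙ β)ᗮ

/-- The simple system (the indecomposable elements) of a positive system `P`. -/
noncomputable def simpleOf {n : ℕ} (P : Finset (EuclideanSpace ℝ (Fin n))) :
    Finset (EuclideanSpace ℝ (Fin n)) :=
  P.filter (fun γ => ¬ ∃ β₁ ∈ P, ∃ β₂ ∈ P, γ = β₁ + β₂)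

/-!
Two distinct positive roots of the same height make a non-acute angle: otherwise their difference
would be a root, hence positive or negative, of height `0`. Vectors with pairwise non-acute angles
lying in an open half-space (here `ht > 0`) are linearly independent, so the roots span a
`q`-dimensional space, whose orthogonal complement is the intersection of the hyperplanes.
-/

theorem linearIndepOn_of_inner_nonpos {E : Type*} [NormedAddCommGroup E] [InnerProductSpace ℝ E]
    {s : Finset E} (f : E →ₗ[ℝ] ℝ) (hf : ∀ v ∈ s, 0 < f v)
    (hs : ∀ v ∈ s, ∀ w ∈ s, v ≠ w → inner ℝ v w ≤ 0) : LinearIndepOn ℝ id (s : Set E) := by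
  suffices key : ∀ g : E → ℝ, ∑ v ∈ s, g v • v = 0 → ∀ v ∈ s, g v ≤ 0 by
    refine linearIndepOn_finset_iff.mpr fun g (hg : ∑ v ∈ s, g v • v = 0) v hv =>
      le_antisymm (key g hg v hv) ?_
    have hg' : ∑ v ∈ s, (-g v) • v = 0 := by simp [neg_smul, sum_neg_distrib, hg]
    simpa using key (fun v => -g v) hg' v hv
  intro g hg
  set u := ∑ v ∈ s, (g v)⁺ • v
  -- `u` is both the `g⁺`- and the `g⁻`-combination, so `⟪u, u⟫` only involves `⟪v, w⟫` with `v ≠ w`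
  have hu : u = ∑ w ∈ s, (g w)⁻ • w := by
    rw [← sub_eq_zero, ← sum_sub_distrib, ← hg]
    exact sum_congr rfl fun v _ => by rw [← sub_smul, posPart_sub_negPart]
  have hu0 : u = 0 := by
    refine real_inner_self_nonpos.mp ?_
    conv_lhs => arg 3; rw [hu]
    rw [sum_inner]
    refine sum_nonpos fun v hv => ?_
    rw [inner_sum]
    refine sum_nonpos fun w hw => ?_
    rw [real_inner_smul_left, real_inner_smul_right]
    rcases eq_or_ne v w with rfl | hvw
    · rcases le_total (g v) 0 with h | h
      · simp [posPart_eq_zero.mpr h]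
      · simp [negPart_eq_zero.mpr h]
    · exact mul_nonpos_of_nonneg_of_nonpos (posPart_nonneg _)
        (mul_nonpos_of_nonneg_of_nonpos (negPart_nonneg _) (hs v hv w hw hvw))
  have hfu : ∑ v ∈ s, (g v)⁺ * f v = 0 := by
    simpa [u, map_sum] using congrArg f hu0
  intro v hv
  have := (sum_eq_zero_iff_of_nonneg fun w hw => mul_nonneg (posPart_nonneg _) (hf w hw).le).mp
    hfu v hv
  exact posPart_eq_zero.mp ((mul_eq_zero.mp this).resolve_right (hf v hv).ne')

namespace CRS

variable {n : ℕ} (R : CRS n) {α β γ : EuclideanSpace ℝ (Fin n)}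

theorem ne_zero_of_mem (hα : α ∈ R.Φ) : α ≠ 0 := fun h => R.zero_notmem (h ▸ hα)

theorem mem_span_Δ_of_mem_pos (hβ : β ∈ R.Pos) :
    β ∈ span ℝ (R.Δ : Set (EuclideanSpace ℝ (Fin n))) :=
  R.pos_eq_sum β hβ ▸ sum_mem fun _ ha => smul_mem _ _ (subset_span ha)

theorem span_Δ : span ℝ (R.Δ : Set (EuclideanSpace ℝ (Fin n))) = ⊤ := by
  refine eq_top_iff.mpr (R.span_top ▸ span_le.mpr fun α hα => ?_)
  rcases R.pos_or_neg α hα with h | h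
  · exact R.mem_span_Δ_of_mem_pos h
  · simpa using Submodule.neg_mem _ (R.mem_span_Δ_of_mem_pos h)

noncomputable def simpleBasis : Module.Basis R.Δ ℝ (EuclideanSpace ℝ (Fin n)) :=
  Module.Basis.mk R.Δ_indep (by simp [R.span_Δ])

noncomputable def htLin : EuclideanSpace ℝ (Fin n) →ₗ[ℝ] ℝ := ∑ a, R.simpleBasis.coord a

theorem htLin_eq_ht (hβ : β ∈ R.Pos) : R.htLin β = R.ht β := by
  have hβ' : β = ∑ a : R.Δ, (R.coeff β a : ℝ) • R.simpleBasis a := by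
    simp only [simpleBasis, Module.Basis.mk_apply]
    rw [sum_coe_sort R.Δ fun a => (R.coeff β a : ℝ) • a]
    exact R.pos_eq_sum β hβ
  rw [ht, Nat.cast_sum, ← sum_coe_sort R.Δ]
  conv_lhs => rw [hβ']
  simp only [htLin, LinearMap.sum_apply, Module.Basis.coord_apply, R.simpleBasis.repr_sum_self]

theorem ht_pos (hβ : β ∈ R.Pos) : 0 < R.ht β := by
  refine Nat.pos_of_ne_zero fun h0 => R.ne_zero_of_mem (R.Pos_sub hβ) ?_
  rw [R.pos_eq_sum β hβ]
  exact sum_eq_zero fun a ha => by rw [sum_eq_zero_iff.mp h0 a ha]; simp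

theorem htLin_pos (hβ : β ∈ R.Pos) : 0 < R.htLin β := by
  rw [R.htLin_eq_ht hβ]
  exact_mod_cast R.ht_pos hβ

theorem sub_notMem_pos_of_ht_eq (hβ : β ∈ R.Pos) (hγ : γ ∈ R.Pos) (hh : R.ht β = R.ht γ) :
    γ - β ∉ R.Pos := fun hδ => by
  have := R.htLin_pos hδ
  rw [map_sub, R.htLin_eq_ht hβ, R.htLin_eq_ht hγ, hh, sub_self] at this
  exact this.false

theorem inner_lt_norm_mul_of_inner_pos (hα : α ∈ R.Φ) (hβ : β ∈ R.Φ) (hne : α ≠ β)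
    (hpos : 0 < inner ℝ α β) : inner ℝ α β < ‖α‖ * ‖β‖ := by
  refine (real_inner_le_norm α β).lt_of_ne fun heq => ?_
  obtain ⟨r, -, rfl⟩ := (norm_inner_eq_norm_iff (𝕜 := ℝ) (R.ne_zero_of_mem hα)
    (R.ne_zero_of_mem hβ)).mp (by rwa [Real.norm_of_nonneg hpos.le])
  rcases R.reduced α hα r hβ with rfl | rfl
  · exact hne (one_smul ℝ α).symm
  · rw [real_inner_smul_right] at hpos
    nlinarith [real_inner_self_nonneg (x := α)]

/-- The product of the two Cartan integers of `α, β` is `4 cos² θ < 4`, so one of them is `1`, and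
the corresponding reflection sends one root to the difference. -/
theorem sub_mem_of_inner_pos (hα : α ∈ R.Φ) (hβ : β ∈ R.Φ) (hne : α ≠ β)
    (hpos : 0 < inner ℝ α β) : β - α ∈ R.Φ := by
  obtain ⟨z₁, hz₁⟩ := R.cartan_int α hα β hβ
  obtain ⟨z₂, hz₂⟩ := R.cartan_int β hβ α hα
  rw [real_inner_comm] at hz₂
  have hnα : 0 < ‖α‖ := norm_pos_iff.mpr (R.ne_zero_of_mem hα)
  have hnβ : 0 < ‖β‖ := norm_pos_iff.mpr (R.ne_zero_of_mem hβ)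
  rw [real_inner_self_eq_norm_sq] at hz₁ hz₂
  have hz₁pos : (0 : ℝ) < z₁ := hz₁ ▸ by positivity
  have hz₂pos : (0 : ℝ) < z₂ := hz₂ ▸ by positivity
  have hprod : (z₁ * z₂ : ℝ) < 4 := by
    have hCS := R.inner_lt_norm_mul_of_inner_pos hα hβ hne hpos
    rw [← hz₁, ← hz₂, div_mul_div_comm, div_lt_iff₀ (by positivity)]
    nlinarith
  have hone : z₁ = 1 ∨ z₂ = 1 := by
    have h₁ : 0 < z₁ := by exact_mod_cast hz₁pos
    have h₂ : 0 < z₂ := by exact_mod_cast hz₂pos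
    have h₁₂ : z₁ * z₂ < 4 := by exact_mod_cast hprod
    by_contra! h
    have : 2 ≤ z₁ := by omega
    have : 2 ≤ z₂ := by omega
    nlinarith
  rcases hone with rfl | rfl
  · simpa [real_inner_self_eq_norm_sq, hz₁] using R.reflect_mem α hα β hβ
  · simpa [real_inner_self_eq_norm_sq, real_inner_comm, hz₂] using
      R.neg_mem _ (R.reflect_mem β hβ α hα)

theorem inner_nonpos_of_ht_eq (hβ : β ∈ R.Pos) (hγ : γ ∈ R.Pos) (hh : R.ht β = R.ht γ)
    (hne : β ≠ γ) : inner ℝ β γ ≤ 0 := by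
  by_contra! hpos
  rcases R.pos_or_neg _ (R.sub_mem_of_inner_pos (R.Pos_sub hβ) (R.Pos_sub hγ) hne hpos) with h | h
  · exact R.sub_notMem_pos_of_ht_eq hβ hγ hh h
  · exact R.sub_notMem_pos_of_ht_eq hγ hβ hh.symm (by rwa [neg_sub] at h)

theorem linearIndepOn_of_ht_eq {B : Finset (EuclideanSpace ℝ (Fin n))} (hB : B ⊆ R.Pos)
    (hht : ∀ β ∈ B, ∀ γ ∈ B, R.ht β = R.ht γ) :
    LinearIndepOn ℝ id (B : Set (EuclideanSpace ℝ (Fin n))) :=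
  linearIndepOn_of_inner_nonpos R.htLin (fun _ hβ => R.htLin_pos (hB hβ))
    fun β hβ γ hγ => R.inner_nonpos_of_ht_eq (hB hβ) (hB hγ) (hht β hβ γ hγ)

end CRS

theorem iInf_H_eq_orthogonal_span {n : ℕ} (B : Finset (EuclideanSpace ℝ (Fin n))) :
    ⨅ β ∈ B, H β = (span ℝ (B : Set (EuclideanSpace ℝ (Fin n))))ᗮ := by
  rw [span_eq_iSup_of_singleton_spans]
  exact (orthogonal_gc ℝ _).l_iSup₂.symm

theorem finrank_quotient_orthogonal {𝕜 E : Type*} [RCLike 𝕜] [NormedAddCommGroup E]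
    [InnerProductSpace 𝕜 E] (K : Submodule 𝕜 E) [K.HasOrthogonalProjection] :
    Module.finrank 𝕜 (E ⧸ Kᗮ) = Module.finrank 𝕜 K :=
  (quotientEquivOfIsCompl _ _ K.isCompl_orthogonal.symm).finrank_eq

/-- the intersection of the hyperplanes of `q` distinct positive
roots of the same height `k+1` has codimension `q`. -/
theorem codim_inf_hyperplanes_same_height {n : ℕ} (R : CRS n)
    (B : Finset (EuclideanSpace ℝ (Fin n))) (hB : B ⊆ R.Pos) (k : ℕ)
    (hht : ∀ β ∈ B, R.ht β = k + 1) :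
    Module.finrank ℝ (EuclideanSpace ℝ (Fin n) ⧸ (⨅ β ∈ B, H β)) = B.card := by
  rw [iInf_H_eq_orthogonal_span, finrank_quotient_orthogonal]
  exact finrank_span_finset_eq_card
    (R.linearIndepOn_of_ht_eq hB fun β hβ γ hγ => (hht β hβ).trans (hht γ hγ).symm)
end

section
/- (Local-global formula for heights) Let Φ be an irreducible crystallographic root system and α ∈ Φ⁺. Then ht_Φ(α) − 1 = Σ_{X} (ht_X(α) − 1), where X ranges over all codimension-2 intersection subspaces contained in H_α of the Weyl arrangement (equivalently, over all rank-2 root subsystems Φ_X = Φ ∩ X^⊥ containing α arising as such localizations), and ht_X(α) is the height of α in the irreducible component of Φ_X containing α, with respect to the positive system Φ⁺ ∩ Φ_X. -/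
open Finset Submodule
open scoped Classical

/-- `HtIn P α m` : `α` has height `m` with respect to the positive system `P`,
i.e. `α` is a nonnegative integer combination of the simple system of `P` whose
coefficients sum to `m`.  (For `α` in an irreducible component of the root
system of `P`, this is the height of `α` in that component.) -/
def HtIn {n : ℕ} (P : Finset (EuclideanSpace ℝ (Fin n)))
    (α : EuclideanSpace ℝ (Fin n)) (m : ℕ) : Prop :=
  ∃ c : EuclideanSpace ℝ (Fin n) → ℕ,
    α = ∑ s ∈ simpleOf P, (c s : ℝ) • s ∧ m = ∑ s ∈ simpleOf P, c s

/-!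
For a positive system `P` with indecomposable elements `S`, the reflection in `s ∈ S` permutes
`P ∖ {s}` and negates the pairing with `s^∨`, so `∑_{β ∈ P} ⟨s, β^∨⟩ = 2`; by linearity
`∑_{β ∈ P} ⟨γ, β^∨⟩ = 2 ht_P(γ)` for every `γ ∈ P`. Apply this to `Φ⁺` and to each localization
`Φ⁺ ∩ X^⊥`, `X ∈ A^α`: the sets `(Φ⁺ ∩ X^⊥) ∖ {α}` partition `Φ⁺ ∖ {α}`, since a positive root
`β ≠ α` lies in exactly one plane `X^⊥ = span {α, β}`. Hence
`2 ht(α) - 2 = ∑_X (2 ht_X(α) - 2)`.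
-/

open scoped RealInnerProductSpace

section Cartan

variable {F : Type*} [NormedAddCommGroup F] [InnerProductSpace ℝ F] {a b : F}

/-- `cartan a b` is the pairing `⟨b, a^∨⟩` of `b` with the coroot of `a`. -/
noncomputable def cartan (a b : F) : ℝ := 2 * ⟪a, b⟫ / ⟪a, a⟫

noncomputable def reflect (a b : F) : F := b - cartan a b • a

lemma cartan_self (ha : a ≠ 0) : cartan a a = 2 := by
  rw [cartan, mul_div_assoc, div_self (real_inner_self_pos.2 ha).ne', mul_one]

lemma cartan_pos_iff (ha : a ≠ 0) : 0 < cartan a b ↔ 0 < ⟪a, b⟫ := by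
  have : 0 < ⟪a, a⟫ := real_inner_self_pos.2 ha
  rw [cartan, mul_div_assoc, mul_pos_iff_of_pos_left two_pos, div_pos_iff_of_pos_right this]

lemma inner_mul_inner_lt_of_ne_smul (ha : a ≠ 0) (hb : ∀ c : ℝ, b ≠ c • a) :
    ⟪a, b⟫ * ⟪a, b⟫ < ⟪a, a⟫ * ⟪b, b⟫ := by
  have hb0 : b ≠ 0 := by simpa using hb 0
  have hlt : |⟪a, b⟫| < ‖a‖ * ‖b‖ :=
    (abs_real_inner_le_norm a b).lt_of_ne fun h =>
      let ⟨r, _, hr⟩ := (norm_inner_eq_norm_iff ha hb0).1 h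
      hb r hr
  rw [real_inner_self_eq_norm_mul_norm, real_inner_self_eq_norm_mul_norm, ← abs_mul_abs_self]
  nlinarith [abs_nonneg ⟪a, b⟫]

lemma cartan_mul_cartan_lt_four (ha : a ≠ 0) (hb : ∀ c : ℝ, b ≠ c • a) :
    cartan a b * cartan b a < 4 := by
  have hb0 : b ≠ 0 := by simpa using hb 0
  have haa : 0 < ⟪a, a⟫ := real_inner_self_pos.2 ha
  have hbb : 0 < ⟪b, b⟫ := real_inner_self_pos.2 hb0
  rw [cartan, cartan, real_inner_comm a b, div_mul_div_comm, div_lt_iff₀ (mul_pos haa hbb)]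
  nlinarith [inner_mul_inner_lt_of_ne_smul ha hb]

lemma inner_reflect_left (ha : a ≠ 0) (b : F) : ⟪reflect a b, a⟫ = -⟪b, a⟫ := by
  have : ⟪a, a⟫ ≠ 0 := (real_inner_self_pos.2 ha).ne'
  rw [reflect, cartan, inner_sub_left, real_inner_smul_left, real_inner_comm a b]
  field_simp
  ring

lemma inner_reflect_self (ha : a ≠ 0) (b : F) :
    ⟪reflect a b, reflect a b⟫ = ⟪b, b⟫ := by
  have : ⟪a, a⟫ ≠ 0 := (real_inner_self_pos.2 ha).ne'
  simp only [reflect, cartan, inner_sub_left, inner_sub_right, real_inner_smul_left,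
    real_inner_smul_right, real_inner_comm a b]
  field_simp
  ring

lemma cartan_reflect_left (ha : a ≠ 0) (b : F) : cartan (reflect a b) a = -cartan b a := by
  rw [cartan, cartan, inner_reflect_left ha, inner_reflect_self ha]
  ring

lemma reflect_reflect (ha : a ≠ 0) (b : F) : reflect a (reflect a b) = b := by
  have h : cartan a (reflect a b) = -cartan a b := by
    rw [cartan, cartan, real_inner_comm, inner_reflect_left ha, real_inner_comm]
    ring
  rw [reflect, h, reflect]
  module

lemma reflect_self (ha : a ≠ 0) : reflect a a = -a := by
  rw [reflect, cartan_self ha]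
  module

lemma cartan_sub (a b c : F) : cartan a (b - c) = cartan a b - cartan a c := by
  rw [cartan, cartan, cartan, inner_sub_right, mul_sub, sub_div]

lemma cartan_sum_smul (a : F) {S : Finset F} (c : F → ℝ) :
    cartan a (∑ t ∈ S, c t • t) = ∑ t ∈ S, c t * cartan a t := by
  simp only [cartan, inner_sum, real_inner_smul_right, mul_sum, sum_div]
  exact sum_congr rfl fun t _ => by ring

lemma sum_cartan_eq_of_eq_sum {P S : Finset F} {γ : F} (c : F → ℝ)
    (hS : ∀ t ∈ S, ∑ β ∈ P, cartan β t = 2) (hγ : γ = ∑ t ∈ S, c t • t) :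
    ∑ β ∈ P, cartan β γ = 2 * ∑ t ∈ S, c t := by
  simp_rw [hγ, cartan_sum_smul, sum_comm (s := P), ← mul_sum]
  rw [mul_sum]
  exact sum_congr rfl fun t ht => by rw [hS t ht, mul_comm]

lemma sum_erase_cartan_self [DecidableEq F] {P : Finset F} {γ : F} (hγP : γ ∈ P) (hγ : γ ≠ 0)
    {m : ℕ} (hm : 1 ≤ m) (h : ∑ β ∈ P, cartan β γ = 2 * m) :
    ∑ β ∈ P.erase γ, cartan β γ = 2 * (m - 1 : ℕ) := by
  rw [sum_erase_eq_sub hγP, h, cartan_self hγ, Nat.cast_sub hm]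
  ring

end Cartan

section

variable {n : ℕ}

lemma mem_simpleOf {P : Finset (EuclideanSpace ℝ (Fin n))}
    {s : EuclideanSpace ℝ (Fin n)} :
    s ∈ simpleOf P ↔ s ∈ P ∧ ∀ b₁ ∈ P, ∀ b₂ ∈ P, s ≠ b₁ + b₂ := by
  simp [simpleOf]

lemma HtIn.one_le {P : Finset (EuclideanSpace ℝ (Fin n))} {γ : EuclideanSpace ℝ (Fin n)}
    {m : ℕ} (h : HtIn P γ m) (hγ : γ ≠ 0) : 1 ≤ m := by
  obtain ⟨c, rfl, rfl⟩ := h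
  rw [Nat.one_le_iff_ne_zero]
  intro h0
  exact hγ (sum_eq_zero fun t ht => by simp [sum_eq_zero_iff.1 h0 t ht])

lemma H_inf_H (a b : EuclideanSpace ℝ (Fin n)) :
    H a ⊓ H b = (span ℝ {a, b})ᗮ := by
  rw [H, H, inf_orthogonal, span_insert]

lemma orthogonal_H_inf_H (a b : EuclideanSpace ℝ (Fin n)) :
    (H a ⊓ H b)ᗮ = span ℝ {a, b} := by
  rw [H_inf_H, orthogonal_orthogonal]

end

namespace CRS

variable {n : ℕ} (R : CRS n) {a b α β γ s : EuclideanSpace ℝ (Fin n)}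
  {X : Submodule ℝ (EuclideanSpace ℝ (Fin n))}

lemma ne_zero_of_mem_s15 (hβ : β ∈ R.Φ) : β ≠ 0 :=
  fun h => R.zero_notmem (h ▸ hβ)

lemma ne_smul_of_mem_Pos (hβ : β ∈ R.Pos) (hs : s ∈ R.Pos) (hne : β ≠ s) (c : ℝ) :
    β ≠ c • s := by
  rintro rfl
  rcases R.reduced s (R.Pos_sub hs) c (R.Pos_sub hβ) with rfl | rfl
  · exact hne (one_smul ℝ s)
  · exact R.not_pos_and_neg s hs (by rwa [neg_one_smul] at hβ)

lemma reflect_mem_Φ (ha : a ∈ R.Φ) (hb : b ∈ R.Φ) : reflect a b ∈ R.Φ :=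
  R.reflect_mem a ha b hb

lemma exists_int_cartan (ha : a ∈ R.Φ) (hb : b ∈ R.Φ) : ∃ z : ℤ, cartan a b = z :=
  R.cartan_int a ha b hb

lemma one_le_cartan (ha : a ∈ R.Φ) (hb : b ∈ R.Φ) (h : 0 < ⟪a, b⟫) : 1 ≤ cartan a b := by
  obtain ⟨z, hz⟩ := R.exists_int_cartan ha hb
  have hpos : (0 : ℝ) < z := hz ▸ (cartan_pos_iff (R.ne_zero_of_mem_s15 ha)).2 h
  rw [hz]
  exact_mod_cast Int.cast_pos.1 hpos

/-- Of two non-proportional roots with positive inner product, one has Cartan integer `1` on the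
other, so a reflection turns one of them into `±(a - b)`. -/
lemma sub_mem_of_inner_pos_s15 (ha : a ∈ R.Φ) (hb : b ∈ R.Φ) (hab : ∀ c : ℝ, b ≠ c • a)
    (h : 0 < ⟪a, b⟫) : a - b ∈ R.Φ := by
  obtain ⟨z, hz⟩ := R.exists_int_cartan ha hb
  obtain ⟨z', hz'⟩ := R.exists_int_cartan hb ha
  have h1 : (1 : ℤ) ≤ z := by exact_mod_cast hz ▸ R.one_le_cartan ha hb h
  have h1' : (1 : ℤ) ≤ z' := by
    exact_mod_cast hz' ▸ R.one_le_cartan hb ha (real_inner_comm a b ▸ h)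
  have h4 : z * z' < 4 := by
    exact_mod_cast hz ▸ hz' ▸ cartan_mul_cartan_lt_four (R.ne_zero_of_mem_s15 ha) hab
  obtain rfl | rfl : z = 1 ∨ z' = 1 := by
    by_contra! hne
    have := lt_of_le_of_ne' h1 hne.1
    have := lt_of_le_of_ne' h1' hne.2
    nlinarith
  · simpa [reflect, hz] using R.neg_mem _ (R.reflect_mem_Φ ha hb)
  · simpa [reflect, hz'] using R.reflect_mem_Φ hb ha

lemma coeff_unique {x y : EuclideanSpace ℝ (Fin n) → ℝ}
    (h : ∑ a ∈ R.Δ, x a • a = ∑ a ∈ R.Δ, y a • a) : ∀ a ∈ R.Δ, x a = y a := by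
  intro a ha
  have := (linearIndepOn_finset_iff (v := id)).1 R.Δ_indep (x - y)
    (by simpa [sub_smul] using sub_eq_zero.2 h) a ha
  simpa [sub_eq_zero] using this

lemma ht_add_eq_mul (hβ : β ∈ R.Pos) (hγ : γ ∈ R.Pos) (hs : s ∈ R.Pos) {k : ℝ}
    (h : β + γ = k • s) : (R.ht β + R.ht γ : ℝ) = k * R.ht s := by
  have hco := R.coeff_unique (x := fun a => R.coeff β a + R.coeff γ a)
    (y := fun a => k * R.coeff s a) (by
      simp only [add_smul, sum_add_distrib, mul_smul, ← smul_sum, ← R.pos_eq_sum β hβ,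
        ← R.pos_eq_sum γ hγ, ← R.pos_eq_sum s hs, h])
  simp only [ht, Nat.cast_sum, ← sum_add_distrib, mul_sum]
  exact sum_congr rfl hco

lemma ht_add (hβ : β ∈ R.Pos) (hγ : γ ∈ R.Pos) (h : β + γ ∈ R.Pos) :
    R.ht (β + γ) = R.ht β + R.ht γ := by
  have := R.ht_add_eq_mul hβ hγ h (one_smul ℝ _).symm
  exact_mod_cast (this.trans (one_mul _)).symm

lemma one_le_ht (hβ : β ∈ R.Pos) : 1 ≤ R.ht β := by
  rw [Nat.one_le_iff_ne_zero]
  intro h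
  apply R.ne_zero_of_mem_s15 (R.Pos_sub hβ)
  rw [R.pos_eq_sum β hβ]
  exact sum_eq_zero fun a ha => by simp [sum_eq_zero_iff.1 h a ha]

lemma ht_eq_one (ha : a ∈ R.Δ) : R.ht a = 1 := by
  have hco := R.coeff_unique (x := fun b => R.coeff a b) (y := fun b => if b = a then 1 else 0)
    (by rw [← R.pos_eq_sum a (R.Δ_sub ha)]; simp [ite_smul, ha])
  have : ∀ b ∈ R.Δ, R.coeff a b = if b = a then 1 else 0 := fun b hb => by
    have := hco b hb
    split_ifs at this ⊢ <;> exact_mod_cast this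
  rw [ht, sum_congr rfl this, sum_ite_eq', if_pos ha]

lemma pos_of_smul_sub_mem_Pos (hβ : β ∈ R.Pos) (hs : s ∈ R.Pos) {k : ℝ}
    (h : k • s - β ∈ R.Pos) : 0 < k := by
  have := R.ht_add_eq_mul hβ h hs (add_sub_cancel β (k • s))
  have h1 : (1 : ℝ) ≤ R.ht β := by exact_mod_cast R.one_le_ht hβ
  have h2 : (1 : ℝ) ≤ R.ht (k • s - β) := by exact_mod_cast R.one_le_ht h
  have h3 : (1 : ℝ) ≤ R.ht s := by exact_mod_cast R.one_le_ht hs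
  nlinarith

lemma mem_PosIn : β ∈ R.PosIn X ↔ β ∈ R.Pos ∧ β ∈ Xᗮ := mem_filter

lemma PosIn_bot : R.PosIn ⊥ = R.Pos :=
  filter_true_of_mem fun _ _ => by simp

lemma mem_PosIn_or_neg_mem_PosIn (hβ : β ∈ R.Φ) (hX : β ∈ Xᗮ) :
    β ∈ R.PosIn X ∨ -β ∈ R.PosIn X := by
  simp only [mem_PosIn, neg_mem_iff, hX, and_true]
  exact R.pos_or_neg β hβ

/-- Were `reflect s β` negative, `k • s - β` would be positive for `k = ⟨β, s^∨⟩ ∈ {1, 2, 3}`,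
and in each case `s` would split as a sum of two elements of `Φ⁺ ∩ X^⊥`. -/
lemma reflect_mem_PosIn (hs : s ∈ simpleOf (R.PosIn X)) (hβ : β ∈ R.PosIn X) (hne : β ≠ s) :
    reflect s β ∈ R.PosIn X := by
  obtain ⟨hsP, hind⟩ := mem_simpleOf.1 hs
  obtain ⟨hsPos, hsX⟩ := R.mem_PosIn.1 hsP
  obtain ⟨hβPos, hβX⟩ := R.mem_PosIn.1 hβ
  have hsΦ := R.Pos_sub hsPos
  have hβΦ := R.Pos_sub hβPos
  have hs0 := R.ne_zero_of_mem_s15 hsΦ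
  have hβs := R.ne_smul_of_mem_Pos hβPos hsPos hne
  refine (R.mem_PosIn_or_neg_mem_PosIn (R.reflect_mem_Φ hsΦ hβΦ)
    (sub_mem hβX (smul_mem _ _ hsX))).resolve_right fun hγ => ?_
  rw [reflect, neg_sub] at hγ
  have hkpos : 0 < cartan s β := R.pos_of_smul_sub_mem_Pos hβPos hsPos (R.mem_PosIn.1 hγ).1
  have hδ : β - s ∈ R.PosIn X := by
    have := R.sub_mem_of_inner_pos_s15 hsΦ hβΦ hβs ((cartan_pos_iff hs0).1 hkpos)
    rw [← neg_sub]
    exact (R.mem_PosIn_or_neg_mem_PosIn this (sub_mem hsX hβX)).resolve_left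
      fun h => hind β hβ _ h (add_sub_cancel β s).symm
  have hk4 : cartan s β < 4 := by
    have := cartan_mul_cartan_lt_four hs0 hβs
    have := R.one_le_cartan hβΦ hsΦ (real_inner_comm s β ▸ (cartan_pos_iff hs0).1 hkpos)
    nlinarith
  obtain ⟨z, hz⟩ := R.exists_int_cartan hsΦ hβΦ
  rw [hz] at hγ hkpos hk4
  obtain rfl | rfl | rfl : z = 1 ∨ z = 2 ∨ z = 3 := by
    have : 0 < z := by exact_mod_cast hkpos
    have : z < 4 := by exact_mod_cast hk4
    omega
  · exact hind β hβ _ hγ (by simp)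
  · exact hind _ hγ _ hδ (by module)
  · have hε : s - (β - s) ∈ R.Φ := by
      refine R.sub_mem_of_inner_pos_s15 hsΦ (R.Pos_sub (R.mem_PosIn.1 hδ).1)
        (fun c h => hβs (c + 1) (by rw [add_smul, one_smul, ← h, sub_add_cancel])) ?_
      rw [← cartan_pos_iff hs0, cartan_sub, hz, cartan_self hs0]
      norm_num
    rcases R.mem_PosIn_or_neg_mem_PosIn hε (sub_mem hsX (sub_mem hβX hsX)) with h | h
    · exact hind _ h _ hδ (by abel)
    · exact hind _ hγ _ h (by module)

lemma sum_cartan_simpleOf (hs : s ∈ simpleOf (R.PosIn X)) :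
    ∑ β ∈ R.PosIn X, cartan β s = 2 := by
  have hsP := (mem_simpleOf.1 hs).1
  have hsPos := (R.mem_PosIn.1 hsP).1
  have hs0 := R.ne_zero_of_mem_s15 (R.Pos_sub hsPos)
  have hperm : ∀ β ∈ (R.PosIn X).erase s, reflect s β ∈ (R.PosIn X).erase s := by
    intro β hβ
    obtain ⟨hne, hβP⟩ := mem_erase.1 hβ
    refine mem_erase.2 ⟨fun h => ?_, R.reflect_mem_PosIn hs hβP hne⟩
    have : β = -s := by rw [← reflect_reflect hs0 β, h, reflect_self hs0]
    exact R.not_pos_and_neg s hsPos (this ▸ (R.mem_PosIn.1 hβP).1)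
  have hsum : ∑ β ∈ (R.PosIn X).erase s, cartan (reflect s β) s =
      ∑ β ∈ (R.PosIn X).erase s, cartan β s :=
    sum_nbij' (reflect s) (reflect s) hperm hperm (fun β _ => reflect_reflect hs0 β)
      (fun β _ => reflect_reflect hs0 β) fun _ _ => rfl
  simp only [cartan_reflect_left hs0, sum_neg_distrib] at hsum
  rw [← add_sum_erase _ _ hsP, cartan_self hs0]
  linarith

lemma exists_nat_sum_simpleOf (hγ : γ ∈ R.PosIn X) :
    ∃ c : EuclideanSpace ℝ (Fin n) → ℕ, γ = ∑ t ∈ simpleOf (R.PosIn X), (c t : ℝ) • t := by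
  induction hN : R.ht γ using Nat.strong_induction_on generalizing γ with
  | _ N ih =>
  by_cases hd : ∃ b₁ ∈ R.PosIn X, ∃ b₂ ∈ R.PosIn X, γ = b₁ + b₂
  · obtain ⟨b₁, h₁, b₂, h₂, rfl⟩ := hd
    have hadd := R.ht_add (R.mem_PosIn.1 h₁).1 (R.mem_PosIn.1 h₂).1 (R.mem_PosIn.1 hγ).1
    have := R.one_le_ht (R.mem_PosIn.1 h₁).1
    have := R.one_le_ht (R.mem_PosIn.1 h₂).1
    obtain ⟨c₁, hc₁⟩ := ih _ (by omega) h₁ rfl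
    obtain ⟨c₂, hc₂⟩ := ih _ (by omega) h₂ rfl
    refine ⟨c₁ + c₂, ?_⟩
    simp only [Pi.add_apply, Nat.cast_add, add_smul, sum_add_distrib, ← hc₁, ← hc₂]
  · refine ⟨fun t => if t = γ then 1 else 0, ?_⟩
    simp [ite_smul, simpleOf, hγ, hd]

lemma exists_htIn (hγ : γ ∈ R.PosIn X) :
    ∃ m, HtIn (R.PosIn X) γ m ∧ ∑ β ∈ R.PosIn X, cartan β γ = 2 * m := by
  obtain ⟨c, hc⟩ := R.exists_nat_sum_simpleOf hγ
  refine ⟨∑ t ∈ simpleOf (R.PosIn X), c t, ⟨c, hc, rfl⟩, ?_⟩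
  rw [sum_cartan_eq_of_eq_sum (fun t => (c t : ℝ)) (fun t ht => R.sum_cartan_simpleOf ht) hc,
    Nat.cast_sum]

lemma Δ_subset_simpleOf : R.Δ ⊆ simpleOf R.Pos := by
  intro a ha
  refine mem_simpleOf.2 ⟨R.Δ_sub ha, fun b₁ h₁ b₂ h₂ h => ?_⟩
  have hsum := R.ht_add h₁ h₂ (h ▸ R.Δ_sub ha)
  rw [← h, R.ht_eq_one ha] at hsum
  have := R.one_le_ht h₁
  have := R.one_le_ht h₂
  omega

lemma sum_cartan_Pos (hα : α ∈ R.Pos) : ∑ β ∈ R.Pos, cartan β α = 2 * R.ht α := by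
  rw [sum_cartan_eq_of_eq_sum (fun a => (R.coeff α a : ℝ)) (fun a ha => ?_) (R.pos_eq_sum α hα),
    ht, Nat.cast_sum]
  rw [← R.PosIn_bot]
  exact R.sum_cartan_simpleOf (R.PosIn_bot ▸ R.Δ_subset_simpleOf ha)

lemma mem_PosIn_H_inf_H (hα : α ∈ R.Pos) (β₀ : EuclideanSpace ℝ (Fin n)) :
    α ∈ R.PosIn (H β₀ ⊓ H α) :=
  R.mem_PosIn.2 ⟨hα, by rw [orthogonal_H_inf_H]; exact subset_span (by simp)⟩

lemma H_inf_H_eq_iff (hα : α ∈ R.Pos) (hβ : β ∈ R.Pos) (hne : β ≠ α)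
    (β₀ : EuclideanSpace ℝ (Fin n)) :
    H β ⊓ H α = H β₀ ⊓ H α ↔ β ∈ (H β₀ ⊓ H α)ᗮ := by
  constructor
  · intro h
    rw [← h, orthogonal_H_inf_H]
    exact subset_span (by simp)
  · intro hmem
    rw [orthogonal_H_inf_H] at hmem
    have hnot : β ∉ ℝ ∙ α := by
      rw [mem_span_singleton]
      rintro ⟨c, rfl⟩
      exact R.ne_smul_of_mem_Pos hβ hα hne c rfl
    have hβ₀ : β₀ ∈ span ℝ {β, α} := mem_span_insert_exchange hmem hnot
    have hle : ∀ {x y : EuclideanSpace ℝ (Fin n)},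
        x ∈ span ℝ {y, α} → span ℝ {x, α} ≤ span ℝ {y, α} :=
      fun hx => span_le.2 (Set.pair_subset hx (subset_span (by simp)))
    rw [H_inf_H, H_inf_H, (hle hmem).antisymm (hle hβ₀)]

lemma filter_H_inf_H_eq (hα : α ∈ R.Pos) (β₀ : EuclideanSpace ℝ (Fin n)) :
    (R.Pos.erase α).filter (fun β => H β ⊓ H α = H β₀ ⊓ H α) =
      (R.PosIn (H β₀ ⊓ H α)).erase α := by
  ext β
  simp only [mem_filter, mem_erase, mem_PosIn]
  constructor
  · rintro ⟨⟨hne, hβ⟩, h⟩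
    exact ⟨hne, hβ, (R.H_inf_H_eq_iff hα hβ hne β₀).1 h⟩
  · rintro ⟨hne, hβ, h⟩
    exact ⟨⟨hne, hβ⟩, (R.H_inf_H_eq_iff hα hβ hne β₀).2 h⟩

end CRS

theorem local_global_height_formula_general {n : ℕ} (R : CRS n)
    (α : EuclideanSpace ℝ (Fin n)) (hα : α ∈ R.Pos) :
    ∃ h : Submodule ℝ (EuclideanSpace ℝ (Fin n)) → ℕ,
      (∀ X ∈ (R.Pos.erase α).image (fun β => H β ⊓ H α),
        HtIn (R.PosIn X) α (h X)) ∧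
      R.ht α - 1 =
        ∑ X ∈ (R.Pos.erase α).image (fun β => H β ⊓ H α), (h X - 1) := by
  set T := (R.Pos.erase α).image (fun β => H β ⊓ H α)
  have hαX : ∀ X ∈ T, α ∈ R.PosIn X := by
    simp only [T, mem_image]
    rintro _ ⟨β₀, -, rfl⟩
    exact R.mem_PosIn_H_inf_H hα β₀
  choose! h hhtIn hsum using fun X hX => R.exists_htIn (hαX X hX)
  refine ⟨h, hhtIn, ?_⟩
  have hα0 := R.ne_zero_of_mem_s15 (R.Pos_sub hα)
  have key : 2 * ((R.ht α - 1 : ℕ) : ℝ) = ∑ X ∈ T, 2 * ((h X - 1 : ℕ) : ℝ) := by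
    rw [← sum_erase_cartan_self hα hα0 (R.one_le_ht hα) (R.sum_cartan_Pos hα),
      ← sum_fiberwise_of_maps_to (t := T) (g := fun β => H β ⊓ H α) (f := fun β => cartan β α)
        fun β hβ => mem_image_of_mem _ hβ]
    refine sum_congr rfl fun X hX => ?_
    obtain ⟨β₀, -, rfl⟩ := mem_image.1 hX
    rw [R.filter_H_inf_H_eq hα β₀,
      sum_erase_cartan_self (hαX _ hX) hα0 ((hhtIn _ hX).one_le hα0) (hsum _ hX)]
  rw [← mul_sum, ← Nat.cast_sum] at key
  exact_mod_cast (mul_right_inj' two_ne_zero).1 key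

/-- local-global formula for heights:
`ht(α) - 1 = ∑_{X ∈ A^α} (ht_X(α) - 1)`, where `X` runs over the codimension-2
intersections `H_β ∩ H_α` (`β ∈ Φ⁺ \ {α}`) of the Weyl arrangement contained in
`H_α`, and `ht_X(α)` is the height of `α` in the rank-2 subsystem
`Φ_X = Φ ∩ X^⊥` with respect to the positive system `Φ⁺ ∩ Φ_X`. -/
theorem local_global_height_formula {n : ℕ} (R : CRS n) (hirr : R.Irred)
    (α : EuclideanSpace ℝ (Fin n)) (hα : α ∈ R.Pos) :
    ∃ h : Submodule ℝ (EuclideanSpace ℝ (Fin n)) → ℕ,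
      (∀ X ∈ (R.Pos.erase α).image (fun β => H β ⊓ H α),
        HtIn (R.PosIn X) α (h X)) ∧
      R.ht α - 1 =
        ∑ X ∈ (R.Pos.erase α).image (fun β => H β ⊓ H α), (h X - 1) :=
  local_global_height_formula_general R α hα
end
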